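/- Let k_1, k_2 ≥ 2 and define F implicitly by the constraint ψ_{k_1}(z_i) = ψ_{k_2}(z_o), i.e., z_o = F(z_i). Then F is continuously differentiable with F'(z_i) = (z_o/z_i)·(1 + φ_{k_1−1}(z_i) − φ_{k_1}(z_i))/(1 + φ_{k_2−1}(z_o) − φ_{k_2}(z_o)) > 0. -/

import Mathlib

/-!
Since `f_k' = f_{k-1}` for the tails `f_k(z) = ∑_{j ≥ k} z^j/j!`, the derivative of
`ψ_k = z f_{k-1} / f_k` is `ψ_k(z)(1 + φ_{k-1}(z) - φ_k(z))/z`, which is also `Var/z` for the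
Poisson(z) law conditioned on `≥ k`; the variance is positive because that law is not a point mass.
Hence `ψ_{k₂}` is strictly increasing with nonvanishing strict derivative. Near each point, `F`
therefore coincides with the local inverse of `ψ_{k₂}` composed with `ψ_{k₁}`, and the chain rule
gives `F' = ψ_{k₁}' / ψ_{k₂}'(F)`, which is positive and continuous.
-/

open Real Filter Set

/-- `truncExpSum k z = Σ_{j≥k} z^j/j!`. -/
noncomputable def truncExpSum (k : ℕ) (z : ℝ) : ℝ :=
  ∑' j : ℕ, if k ≤ j then z ^ j / (Nat.factorial j : ℝ) else 0

/-- `poisTail k z = P(Poi(z) ≥ k) = e^{-z} Σ_{j≥k} z^j/j!`. -/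
noncomputable def poisTail (k : ℕ) (z : ℝ) : ℝ := Real.exp (-z) * truncExpSum k z

/-- Mean of Poisson(z) conditioned on being ≥ k: `ψ_k(z) = z f_{k-1}(z)/f_k(z)`. -/
noncomputable def truncMean (k : ℕ) (z : ℝ) : ℝ :=
  z * truncExpSum (k - 1) z / truncExpSum k z

/-- Second moment of the truncated Poisson. -/
noncomputable def truncSecondMoment (k : ℕ) (z : ℝ) : ℝ :=
  (∑' j : ℕ, if k ≤ j then (j : ℝ) ^ 2 * z ^ j / (Nat.factorial j : ℝ) else 0)
    / truncExpSum k z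

/-- Variance of the truncated Poisson. -/
noncomputable def truncVar (k : ℕ) (z : ℝ) : ℝ :=
  truncSecondMoment k z - (truncMean k z) ^ 2

/-- `φ_r(z) = z·P(Poi(z)=r−1)/P(Poi(z)≥r)` for `r ≥ 1`, with `φ_0 := 0`. -/
noncomputable def phiP (r : ℕ) (z : ℝ) : ℝ :=
  if r = 0 then 0
  else z * (Real.exp (-z) * z ^ (r - 1) / (Nat.factorial (r - 1) : ℝ)) / poisTail r z

/-- `H(z_i,z_o) = (1 − φ_{k_1}(z_i))(1 − φ_{k_2}(z_o)) − φ_{k_1−1}(z_i)φ_{k_2−1}(z_o)`. -/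
noncomputable def Hfun (k1 k2 : ℕ) (zi zo : ℝ) : ℝ :=
  (1 - phiP k1 zi) * (1 - phiP k2 zo) - phiP (k1 - 1) zi * phiP (k2 - 1) zo

/-- `Ψ(z_i,z_o) = max{ z_i/(p_{k_1}(z_i)p_{k_2−1}(z_o)), z_o/(p_{k_2}(z_o)p_{k_1−1}(z_i)) }`. -/
noncomputable def Psi (k1 k2 : ℕ) (zi zo : ℝ) : ℝ :=
  max (zi / (poisTail k1 zi * poisTail (k2 - 1) zo))
      (zo / (poisTail k2 zo * poisTail (k1 - 1) zi))

open Topology Nat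

theorem sq_lt_mul_of_hasSum {ι : Type*} {w x : ι → ℝ} {W S₁ S₂ : ℝ} (hw : ∀ i, 0 ≤ w i)
    (h₀ : HasSum w W) (h₁ : HasSum (fun i ↦ w i * x i) S₁)
    (h₂ : HasSum (fun i ↦ w i * x i ^ 2) S₂) {i j : ι} (hi : 0 < w i) (hj : 0 < w j)
    (hij : x i ≠ x j) : S₁ ^ 2 < W * S₂ := by
  have hW : 0 < W := hi.trans_le (le_hasSum h₀ i fun l _ ↦ hw l)
  set m := S₁ / W
  -- the variance about the weighted mean `m`, which is positive as `x` is not `w`-a.e. constant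
  have hdev : HasSum (fun l ↦ w l * (x l - m) ^ 2) ((W * S₂ - S₁ ^ 2) / W) := by
    have hval : (W * S₂ - S₁ ^ 2) / W = S₂ - 2 * m * S₁ + m ^ 2 * W := by
      simp only [m]; field_simp; ring
    rw [hval]
    exact ((h₂.sub (h₁.mul_left (2 * m))).add (h₀.mul_left (m ^ 2))).congr_fun fun l ↦ by ring
  have hpos : ∀ l, 0 < w l → x l ≠ m → 0 < (W * S₂ - S₁ ^ 2) / W := fun l hl hxl ↦
    (by have := sub_ne_zero.2 hxl; positivity : 0 < w l * (x l - m) ^ 2).trans_le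
      (le_hasSum hdev l fun n _ ↦ mul_nonneg (hw n) (sq_nonneg _))
  have : 0 < (W * S₂ - S₁ ^ 2) / W := by
    by_cases hxi : x i = m
    · exact hpos j hj fun h ↦ hij (hxi.trans h.symm)
    · exact hpos i hi hxi
  linarith [(div_pos_iff_of_pos_right hW).1 this]

theorem HasStrictDerivAt.hasDerivAt_of_comp_eq {𝕜 : Type*} [NontriviallyNormedField 𝕜]
    [CompleteSpace 𝕜] {f g F : 𝕜 → 𝕜} {s : Set 𝕜} {x f' g' : 𝕜}
    (hg : HasStrictDerivAt g g' (F x)) (hg' : g' ≠ 0) (hinj : s.InjOn g) (hs : s ∈ 𝓝 (F x))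
    (hf : HasDerivAt f f' x) (hF : ∀ᶠ y in 𝓝 x, F y ∈ s ∧ g (F y) = f y) :
    HasDerivAt F (f' / g') x := by
  set h := hg.localInverse g g' (F x) hg'
  have hfx : f x = g (F x) := hF.self_of_nhds.2.symm
  have hh : HasStrictDerivAt h g'⁻¹ (f x) := hfx ▸ hg.to_localInverse hg'
  have hleft : h (g (F x)) = F x := (hg.eventually_left_inverse hg').self_of_nhds
  have hhs : h ⁻¹' s ∈ 𝓝 (f x) := by
    refine hh.hasDerivAt.continuousAt.preimage_mem_nhds ?_
    rwa [hfx, hleft]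
  have hright : ∀ᶠ w in 𝓝 (f x), g (h w) = w := hfx ▸ hg.eventually_right_inverse hg'
  have hFeq : F =ᶠ[𝓝 x] h ∘ f := by
    filter_upwards [hF, hf.continuousAt.preimage_mem_nhds (inter_mem hhs hright)]
      with y ⟨hFy, hgF⟩ ⟨hhy, hgh⟩
    exact hinj hFy hhy (hgF.trans hgh.symm)
  rw [div_eq_inv_mul]
  exact (hh.hasDerivAt.comp x hf).congr_of_eventuallyEq hFeq

theorem contDiffOn_one_of_hasDerivAt {f f' : ℝ → ℝ} {s : Set ℝ} (hs : IsOpen s)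
    (hf : ∀ x ∈ s, HasDerivAt f (f' x) x) (hf' : ContinuousOn f' s) : ContDiffOn ℝ 1 f s := by
  rw [show (1 : WithTop ℕ∞) = 0 + 1 from rfl, contDiffOn_succ_iff_deriv_of_isOpen hs]
  refine ⟨fun x hx ↦ (hf x hx).differentiableAt.differentiableWithinAt, by simp, ?_⟩
  exact contDiffOn_zero.2 (hf'.congr fun x hx ↦ (hf x hx).deriv)

noncomputable def truncExpTerm (k : ℕ) (z : ℝ) (j : ℕ) : ℝ := if k ≤ j then z ^ j / j ! else 0

section truncExpSum

variable (k : ℕ) {z : ℝ}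

theorem truncExpTerm_nonneg (hz : 0 ≤ z) (j : ℕ) : 0 ≤ truncExpTerm k z j := by
  unfold truncExpTerm; split_ifs <;> positivity

theorem hasSum_truncExpTerm (z : ℝ) : HasSum (truncExpTerm k z) (truncExpSum k z) := by
  have : Summable (truncExpTerm k z) :=
    ((Real.summable_pow_div_factorial z).indicator {j | k ≤ j}).congr fun j ↦ by
      simp [truncExpTerm, Set.indicator_apply]
  exact this.hasSum

theorem truncExpSum_zero (z : ℝ) : truncExpSum 0 z = exp z := by
  rw [exp_eq_exp_ℝ]
  exact (hasSum_truncExpTerm 0 z).unique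
    ((NormedSpace.expSeries_div_hasSum_exp z).congr_fun fun j ↦ by simp [truncExpTerm])

theorem truncExpSum_succ (z : ℝ) :
    truncExpSum (k + 1) z = truncExpSum k z - z ^ k / k ! := by
  refine eq_sub_of_add_eq' ((hasSum_ite_eq k (z ^ k / k !)).add (hasSum_truncExpTerm (k + 1) z)
    |>.unique ((hasSum_truncExpTerm k z).congr_fun fun j ↦ ?_))
  unfold truncExpTerm
  rcases lt_trichotomy j k with h | rfl | h
  · simp [h.ne, h.not_ge, (h.trans (lt_succ_self k)).not_ge]
  · simp
  · simp [h.ne', h.le, succ_le_of_lt h]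

theorem truncExpSum_pos (hz : 0 < z) : 0 < truncExpSum k z :=
  hasSum_lt (f := 0) (i := k) (fun j ↦ truncExpTerm_nonneg k hz.le j)
    (by rw [Pi.zero_apply, truncExpTerm, if_pos le_rfl]; positivity)
    hasSum_zero (hasSum_truncExpTerm k z)

theorem hasStrictDerivAt_pow_div_factorial (z : ℝ) :
    HasStrictDerivAt (fun z : ℝ ↦ z ^ (k + 1) / (k + 1)!) (z ^ k / k !) z := by
  refine ((hasStrictDerivAt_pow (k + 1) z).div_const ((k + 1)! : ℝ)).congr_deriv ?_
  rw [factorial_succ, add_tsub_cancel_right]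
  push_cast
  field_simp

theorem hasStrictDerivAt_truncExpSum (z : ℝ) :
    HasStrictDerivAt (truncExpSum (k + 1)) (truncExpSum k z) z := by
  induction k with
  | zero =>
    have : truncExpSum 1 = fun z ↦ exp z - 1 := by
      funext z; simp [truncExpSum_succ, truncExpSum_zero]
    rw [this, truncExpSum_zero]
    exact (hasStrictDerivAt_exp z).sub_const 1
  | succ k ih =>
    rw [funext (truncExpSum_succ (k + 1)), truncExpSum_succ k z]
    exact ih.sub (hasStrictDerivAt_pow_div_factorial k z)

theorem continuous_truncExpSum : Continuous (truncExpSum k) := by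
  cases k with
  | zero => simpa [funext truncExpSum_zero] using continuous_exp
  | succ k => exact continuous_iff_continuousAt.2 fun z ↦
      (hasStrictDerivAt_truncExpSum k z).hasDerivAt.continuousAt

end truncExpSum

section truncMean

variable (k : ℕ) {z : ℝ}

theorem truncExpTerm_succ_mul (z : ℝ) (j : ℕ) :
    truncExpTerm (k + 1) z (j + 1) * (j + 1) = z * truncExpTerm k z j := by
  unfold truncExpTerm
  by_cases h : k ≤ j
  · simp only [h, add_le_add_iff_right, if_true, factorial_succ, cast_mul, cast_succ]
    field_simp
    ring
  · simp [h]

theorem hasSum_truncExpTerm_mul_self (z : ℝ) :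
    HasSum (fun j ↦ truncExpTerm (k + 1) z j * j) (z * truncExpSum k z) := by
  rw [← hasSum_nat_add_iff' 1]
  simpa [truncExpTerm_succ_mul] using (hasSum_truncExpTerm k z).mul_left z

theorem hasSum_truncExpTerm_mul_sq (z : ℝ) :
    HasSum (fun j ↦ truncExpTerm (k + 2) z j * j ^ 2)
      (z * (z * truncExpSum k z + truncExpSum (k + 1) z)) := by
  rw [← hasSum_nat_add_iff' 1]
  simp only [Finset.sum_range_one, cast_zero, ne_eq, OfNat.ofNat_ne_zero, not_false_eq_true,
    zero_pow, mul_zero, sub_zero]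
  refine (((hasSum_truncExpTerm_mul_self k z).add (hasSum_truncExpTerm (k + 1) z)).mul_left z)
    |>.congr_fun fun j ↦ ?_
  push_cast
  linear_combination ((j : ℝ) + 1) * truncExpTerm_succ_mul (k + 1) z j

theorem mul_truncExpSum_sq_lt (hz : 0 < z) :
    z * truncExpSum (k + 1) z ^ 2
      < truncExpSum (k + 2) z * (truncExpSum (k + 1) z + z * truncExpSum k z) := by
  have h := sq_lt_mul_of_hasSum (truncExpTerm_nonneg (k + 2) hz.le)
    (hasSum_truncExpTerm (k + 2) z) (hasSum_truncExpTerm_mul_self (k + 1) z)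
    (hasSum_truncExpTerm_mul_sq k z) (i := k + 2) (j := k + 3)
    (by rw [truncExpTerm, if_pos le_rfl]; positivity)
    (by rw [truncExpTerm, if_pos (by omega)]; positivity) (by simp)
  refine lt_of_mul_lt_mul_left ?_ hz.le
  linarith

theorem phiP_succ (r : ℕ) (z : ℝ) :
    phiP (r + 1) z = z * (z ^ r / r !) / truncExpSum (r + 1) z := by
  rw [phiP, if_neg r.succ_ne_zero, poisTail, add_tsub_cancel_right,
    show z * (exp (-z) * z ^ r / r !) = exp (-z) * (z * (z ^ r / r !)) by ring,
    mul_div_mul_left _ _ (exp_ne_zero _)]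

theorem one_add_phiP_sub_phiP_eq (hz : 0 < z) :
    1 + phiP (k + 1) z - phiP (k + 2) z
      = ((truncExpSum (k + 1) z + z * truncExpSum k z) * truncExpSum (k + 2) z
          - z * truncExpSum (k + 1) z ^ 2) / (truncExpSum (k + 1) z * truncExpSum (k + 2) z) := by
  have t₁ : z ^ k / k ! = truncExpSum k z - truncExpSum (k + 1) z := by
    linarith [truncExpSum_succ k z]
  have t₂ : z ^ (k + 1) / (k + 1)! = truncExpSum (k + 1) z - truncExpSum (k + 2) z := by
    linarith [truncExpSum_succ (k + 1) z]
  have := (truncExpSum_pos (k + 1) hz).ne'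
  have := (truncExpSum_pos (k + 2) hz).ne'
  rw [phiP_succ, phiP_succ, t₁, t₂]
  field_simp
  ring

variable {k}

theorem one_add_phiP_sub_phiP_pos (hk : 2 ≤ k) (hz : 0 < z) :
    0 < 1 + phiP (k - 1) z - phiP k z := by
  obtain ⟨m, rfl⟩ := Nat.exists_eq_add_of_le' hk
  rw [show m + 2 - 1 = m + 1 from rfl, one_add_phiP_sub_phiP_eq m hz]
  have := mul_truncExpSum_sq_lt m hz
  have := truncExpSum_pos (m + 1) hz
  have := truncExpSum_pos (m + 2) hz
  exact div_pos (by linarith) (by positivity)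

theorem truncMean_pos (hz : 0 < z) : 0 < truncMean k z :=
  div_pos (mul_pos hz (truncExpSum_pos _ hz)) (truncExpSum_pos _ hz)

theorem hasStrictDerivAt_truncMean (hk : 2 ≤ k) (hz : 0 < z) :
    HasStrictDerivAt (truncMean k) (truncMean k z * (1 + phiP (k - 1) z - phiP k z) / z) z := by
  obtain ⟨m, rfl⟩ := Nat.exists_eq_add_of_le' hk
  have hf₁ := (truncExpSum_pos (m + 1) hz).ne'
  have hf₂ := (truncExpSum_pos (m + 2) hz).ne'
  have hψ : truncMean (m + 2) = (fun z ↦ z * truncExpSum (m + 1) z) / truncExpSum (m + 2) := rfl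
  rw [hψ]
  refine (((hasStrictDerivAt_id z).mul (hasStrictDerivAt_truncExpSum m z)).div
    (hasStrictDerivAt_truncExpSum (m + 1) z) hf₂).congr_deriv ?_
  rw [show m + 2 - 1 = m + 1 from rfl, one_add_phiP_sub_phiP_eq m hz]
  simp only [Pi.div_apply, Pi.mul_apply, id]
  field_simp

theorem strictMonoOn_truncMean (hk : 2 ≤ k) : StrictMonoOn (truncMean k) (Ioi 0) := by
  refine strictMonoOn_of_deriv_pos (convex_Ioi 0)
    (fun z hz ↦ (hasStrictDerivAt_truncMean hk hz).hasDerivAt.continuousAt.continuousWithinAt)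
    fun z hz ↦ ?_
  rw [interior_Ioi] at hz
  rw [(hasStrictDerivAt_truncMean hk hz).hasDerivAt.deriv]
  exact div_pos (mul_pos (truncMean_pos hz) (one_add_phiP_sub_phiP_pos hk hz)) hz

variable (k) in
theorem continuousOn_phiP : ContinuousOn (phiP k) (Ioi 0) := by
  cases k with
  | zero => exact continuousOn_const.congr fun z _ ↦ if_pos rfl
  | succ k =>
    rw [funext (phiP_succ k)]
    exact ContinuousOn.div (by fun_prop) (continuous_truncExpSum _).continuousOn
      fun z hz ↦ (truncExpSum_pos _ hz).ne'

end truncMean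

theorem hasDerivAt_of_truncMean_comp_eq {k₁ k₂ : ℕ} (h₁ : 2 ≤ k₁) (h₂ : 2 ≤ k₂) {F : ℝ → ℝ}
    (hF : ∀ z, 0 < z → 0 < F z ∧ truncMean k₂ (F z) = truncMean k₁ z) {z : ℝ} (hz : 0 < z) :
    HasDerivAt F ((F z / z) * (1 + phiP (k₁ - 1) z - phiP k₁ z)
      / (1 + phiP (k₂ - 1) (F z) - phiP k₂ (F z))) z := by
  obtain ⟨hFz, hψ⟩ := hF z hz
  have hψ₁ := truncMean_pos (k := k₁) hz
  have hA₂ := one_add_phiP_sub_phiP_pos h₂ hFz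
  have hd := (hasStrictDerivAt_truncMean h₂ hFz).hasDerivAt_of_comp_eq
    (div_pos (mul_pos (truncMean_pos hFz) hA₂) hFz).ne' (strictMonoOn_truncMean h₂).injOn
    (Ioi_mem_nhds hFz) (hasStrictDerivAt_truncMean h₁ hz).hasDerivAt
    (by filter_upwards [Ioi_mem_nhds hz] with y hy using hF y hy)
  refine hd.congr_deriv ?_
  rw [hψ]
  field_simp

theorem continuousOn_one_add_phiP_sub_phiP (k : ℕ) :
    ContinuousOn (fun z ↦ 1 + phiP (k - 1) z - phiP k z) (Ioi 0) :=
  (continuousOn_const.add (continuousOn_phiP _)).sub (continuousOn_phiP _)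

/-- the implicit function `F` defined by `ψ_{k_1}(z_i) = ψ_{k_2}(F(z_i))`
is continuously differentiable with positive derivative of the stated form. -/
theorem stmt12 (k1 k2 : ℕ) (h1 : 2 ≤ k1) (h2 : 2 ≤ k2) (F : ℝ → ℝ)
    (hF : ∀ z : ℝ, 0 < z → 0 < F z ∧ truncMean k2 (F z) = truncMean k1 z) :
    (∀ zi : ℝ, 0 < zi →
      HasDerivAt F
        ((F zi / zi) * (1 + phiP (k1 - 1) zi - phiP k1 zi)
          / (1 + phiP (k2 - 1) (F zi) - phiP k2 (F zi))) zi ∧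
      0 < (F zi / zi) * (1 + phiP (k1 - 1) zi - phiP k1 zi)
          / (1 + phiP (k2 - 1) (F zi) - phiP k2 (F zi))) ∧
    ContDiffOn ℝ 1 F (Set.Ioi 0) := by
  have hF' : ∀ z ∈ Ioi (0 : ℝ), HasDerivAt F ((F z / z) * (1 + phiP (k1 - 1) z - phiP k1 z)
      / (1 + phiP (k2 - 1) (F z) - phiP k2 (F z))) z :=
    fun z hz ↦ hasDerivAt_of_truncMean_comp_eq h1 h2 hF hz
  have hFpos : MapsTo F (Ioi 0) (Ioi 0) := fun z hz ↦ (hF z hz).1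
  refine ⟨fun z hz ↦ ⟨hF' z hz, ?_⟩, contDiffOn_one_of_hasDerivAt isOpen_Ioi hF' ?_⟩
  · have hA₁ := one_add_phiP_sub_phiP_pos h1 hz
    have hA₂ := one_add_phiP_sub_phiP_pos h2 (hFpos hz)
    exact div_pos (mul_pos (div_pos (hFpos hz) hz) hA₁) hA₂
  · have hFc : ContinuousOn F (Ioi 0) := fun z hz ↦ (hF' z hz).continuousAt.continuousWithinAt
    exact ((hFc.div continuousOn_id fun z hz ↦ hz.ne').mul
      (continuousOn_one_add_phiP_sub_phiP k1)).div
      ((continuousOn_one_add_phiP_sub_phiP k2).comp hFc hFpos)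
      fun z hz ↦ (one_add_phiP_sub_phiP_pos h2 (hFpos hz)).ne'
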